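/- arXiv:2406.03050 — 3 statements merged into one kernel-verified Lean document; each statement's English description precedes it below -/
import Mathlib

section
/- The multiplicity of L⁻¹ as a root of P is odd if and only if one of the following three mutually exclusive cases holds: (Case I) Condition (I) holds and h(L⁻¹) ≠ 0; (Case II) Conditions (II) and (III) hold and Condition (I) fails; (Case III) Conditions (I) and (II) hold and Condition (III) fails. -/
open Polynomial

/-- The quadratic factor `h(X) = 1 − (s a² − 2 s e L^{k−1}) X + s² e² L^{2k−2} X²`
of the reduced Euler factor. -/
noncomputable def hPoly (F : Type*) [Field F] (a e s L : F) (k : ℕ) : F[X] :=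
  1 - C (s * a ^ 2 - 2 * s * e * L ^ (k - 1)) * X + C (s ^ 2 * e ^ 2 * L ^ (2 * k - 2)) * X ^ 2

/-- The linear factor `g(X) = 1 − e s L^{k−1} X` of the reduced Euler factor. -/
noncomputable def gPoly (F : Type*) [Field F] (e s L : F) (k : ℕ) : F[X] :=
  1 - C (e * s * L ^ (k - 1)) * X

/-- Condition (I): `e s L^{k−2} = 1`. -/
def condI (F : Type*) [Field F] (e s L : F) (k : ℕ) : Prop :=
  e * s * L ^ (k - 2) = 1

/-- Condition (II): `s⁻¹ a² e⁻² L^{3−2k} − 2 s⁻¹ e⁻¹ L^{2−k} − s⁻² e⁻² L^{4−2k} = 1`. -/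
def condII (F : Type*) [Field F] (a e s L : F) (k : ℕ) : Prop :=
  s⁻¹ * a ^ 2 * (e⁻¹) ^ 2 * L ^ ((3 : ℤ) - 2 * k)
    - 2 * s⁻¹ * e⁻¹ * L ^ ((2 : ℤ) - k)
    - (s⁻¹) ^ 2 * (e⁻¹) ^ 2 * L ^ ((4 : ℤ) - 2 * k) = 1

/-- Condition (III): `s⁻² e⁻² L^{4−2k} ≠ 1`. -/
def condIII (F : Type*) [Field F] (e s L : F) (k : ℕ) : Prop :=
  (s⁻¹) ^ 2 * (e⁻¹) ^ 2 * L ^ ((4 : ℤ) - 2 * k) ≠ 1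

section Aux

variable {F : Type*} [Field F] {a e s L t : F}

/-- Condition (II) unfolded, with `t = L^m`. -/
lemma condII_iff_aux (ha : a ≠ 0) (he : e ≠ 0) (hs : s ≠ 0) (hL : L ≠ 0) (ht : t ≠ 0) :
    (s⁻¹ * a ^ 2 * (e⁻¹) ^ 2 * (t ^ 2 * L)⁻¹ - 2 * s⁻¹ * e⁻¹ * t⁻¹
      - (s⁻¹) ^ 2 * (e⁻¹) ^ 2 * (t ^ 2)⁻¹ = 1) ↔
    s * a ^ 2 = s ^ 2 * e ^ 2 * (t ^ 2 * L) + L + 2 * s * e * (t * L) := by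
  have e1 : s⁻¹ * a ^ 2 * (e⁻¹) ^ 2 * (t ^ 2 * L)⁻¹ = a ^ 2 / (s * e ^ 2 * (t ^ 2 * L)) := by
    field_simp
  have e2 : 2 * s⁻¹ * e⁻¹ * t⁻¹ = 2 / (s * e * t) := by field_simp
  have e3 : (s⁻¹) ^ 2 * (e⁻¹) ^ 2 * (t ^ 2)⁻¹ = 1 / (s ^ 2 * e ^ 2 * t ^ 2) := by field_simp
  have expand : s⁻¹ * a ^ 2 * (e⁻¹) ^ 2 * (t ^ 2 * L)⁻¹ - 2 * s⁻¹ * e⁻¹ * t⁻¹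
      - (s⁻¹) ^ 2 * (e⁻¹) ^ 2 * (t ^ 2)⁻¹
      = (s * a ^ 2 - 2 * s * e * (t * L) - L) / (s ^ 2 * e ^ 2 * (t ^ 2 * L)) := by
    rw [e1, e2, e3, div_sub_div _ _ (by simp [hs, he, ht, hL]) (by simp [hs, he, ht]),
      div_sub_div _ _ (by simp [hs, he, ht, hL]) (by simp [hs, he, ht]),
      div_eq_div_iff (by simp [hs, he, ht, hL]) (by simp [hs, he, ht, hL])]
    ring
  rw [expand, div_eq_one_iff_eq (by simp [hs, he, ht, hL])]
  constructor <;> intro h <;> linear_combination h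

lemma g_factor_aux (hL : L ≠ 0) (h : e * s * t = 1) :
    (1 - C (e * s * (t * L)) * X : F[X]) = C (-L) * (X - C L⁻¹) := by
  have h' : e * s * (t * L) = L := by linear_combination L * h
  rw [h', map_neg]
  have c1 : C L * C L⁻¹ = (1 : F[X]) := by rw [← C_mul, mul_inv_cancel₀ hL, C_1]
  linear_combination -c1

lemma h_factor_aux (ha : a ≠ 0) (he : e ≠ 0) (hs : s ≠ 0) (hL : L ≠ 0) (ht : t ≠ 0)
    (hc : s * a ^ 2 = s ^ 2 * e ^ 2 * (t ^ 2 * L) + L + 2 * s * e * (t * L)) :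
    (1 - C (s * a ^ 2 - 2 * s * e * (t * L)) * X + C (s ^ 2 * e ^ 2 * (t ^ 2 * L ^ 2)) * X ^ 2
        : F[X])
      = C (s ^ 2 * e ^ 2 * (t ^ 2 * L ^ 2)) * (X - C L⁻¹)
          * (X - C ((s ^ 2 * e ^ 2 * (t ^ 2 * L))⁻¹)) := by
  have hD : s ^ 2 * e ^ 2 * (t ^ 2 * L) ≠ 0 := by simp [hs, he, ht, hL]
  have cD : (s ^ 2 * e ^ 2 * (t ^ 2 * L)) * (s ^ 2 * e ^ 2 * (t ^ 2 * L))⁻¹ = 1 :=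
    mul_inv_cancel₀ hD
  have cL : L * L⁻¹ = 1 := mul_inv_cancel₀ hL
  have f1 : s ^ 2 * e ^ 2 * (t ^ 2 * L ^ 2) * (L⁻¹ * (s ^ 2 * e ^ 2 * (t ^ 2 * L))⁻¹) = 1 := by
    linear_combination (s ^ 2 * e ^ 2 * (t ^ 2 * L) * (s ^ 2 * e ^ 2 * (t ^ 2 * L))⁻¹) * cL + cD
  have f2 : s ^ 2 * e ^ 2 * (t ^ 2 * L ^ 2) * L⁻¹
      + s ^ 2 * e ^ 2 * (t ^ 2 * L ^ 2) * (s ^ 2 * e ^ 2 * (t ^ 2 * L))⁻¹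
      = s * a ^ 2 - 2 * s * e * (t * L) := by
    linear_combination (s ^ 2 * e ^ 2 * (t ^ 2 * L)) * cL + L * cD - hc
  have F1 := congrArg (C : F →+* F[X]) f1
  have F2 := congrArg (C : F →+* F[X]) f2
  simp only [map_mul, map_add, map_sub, map_pow, map_one, map_ofNat] at F1 F2
  simp only [map_mul, map_sub, map_pow, map_ofNat]
  linear_combination -F1 + X * F2

end Aux

/-- Parity of the multiplicity of `L⁻¹` as a root of `P = h · g` (the algebraic core of
Lemma 2.5): the multiplicity is odd iff exactly one of the three mutually exclusive
cases (I), (II), (III) of the proof of Lemma 2.5 holds. -/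
theorem odd_multiplicity_iff (F : Type*) [Field F] (a e s L : F)
    (ha : a ≠ 0) (he : e ≠ 0) (hs : s ≠ 0) (hL : L ≠ 0) (k : ℕ) (hk : 2 ≤ k) :
    Odd ((hPoly F a e s L k * gPoly F e s L k).rootMultiplicity L⁻¹) ↔
      (condI F e s L k ∧ (hPoly F a e s L k).eval L⁻¹ ≠ 0) ∨
      (condII F a e s L k ∧ condIII F e s L k ∧ ¬ condI F e s L k) ∨
      (condI F e s L k ∧ condII F a e s L k ∧ ¬ condIII F e s L k) := by
  obtain ⟨m, rfl⟩ : ∃ m, k = m + 2 := ⟨k - 2, by omega⟩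
  have ht : L ^ m ≠ 0 := pow_ne_zero _ hL
  -- rewrite the polynomials with t = L^m
  have geq : gPoly F e s L (m + 2) = 1 - C (e * s * (L ^ m * L)) * X := by
    unfold gPoly
    norm_num [pow_succ]
  have heq : hPoly F a e s L (m + 2)
      = 1 - C (s * a ^ 2 - 2 * s * e * (L ^ m * L)) * X
        + C (s ^ 2 * e ^ 2 * ((L ^ m) ^ 2 * L ^ 2)) * X ^ 2 := by
    unfold hPoly
    rw [show m + 2 - 1 = m + 1 by omega, show 2 * (m + 2) - 2 = m * 2 + 2 by omega,
      show L ^ (m * 2 + 2) = (L ^ m) ^ 2 * L ^ 2 by rw [pow_add, pow_mul],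
      show L ^ (m + 1) = L ^ m * L from pow_succ L m]
  -- conditions in t-form
  have cI_iff : condI F e s L (m + 2) ↔ e * s * L ^ m = 1 := by
    unfold condI
    rw [show m + 2 - 2 = m by omega]
  have zp1 : L ^ ((3 : ℤ) - 2 * (m + 2 : ℕ)) = ((L ^ m) ^ 2 * L)⁻¹ := by
    rw [show ((3 : ℤ) - 2 * (m + 2 : ℕ)) = -(m * 2 + 1 : ℕ) by push_cast; ring,
      zpow_neg, zpow_natCast, pow_succ, pow_mul]
  have zp2 : L ^ ((2 : ℤ) - (m + 2 : ℕ)) = (L ^ m)⁻¹ := by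
    rw [show ((2 : ℤ) - (m + 2 : ℕ)) = -(m : ℕ) by push_cast; ring, zpow_neg, zpow_natCast]
  have zp3 : L ^ ((4 : ℤ) - 2 * (m + 2 : ℕ)) = ((L ^ m) ^ 2)⁻¹ := by
    rw [show ((4 : ℤ) - 2 * (m + 2 : ℕ)) = -(m * 2 : ℕ) by push_cast; ring,
      zpow_neg, zpow_natCast, pow_mul]
  have cII_iff : condII F a e s L (m + 2) ↔
      s * a ^ 2 = s ^ 2 * e ^ 2 * ((L ^ m) ^ 2 * L) + L + 2 * s * e * (L ^ m * L) := by
    unfold condII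
    rw [zp1, zp2, zp3]
    exact condII_iff_aux ha he hs hL ht
  have cIII_iff : condIII F e s L (m + 2) ↔ s ^ 2 * e ^ 2 * (L ^ m) ^ 2 ≠ 1 := by
    unfold condIII
    rw [zp3, show (s⁻¹) ^ 2 * (e⁻¹) ^ 2 * ((L ^ m) ^ 2)⁻¹
        = (s ^ 2 * e ^ 2 * (L ^ m) ^ 2)⁻¹ by rw [mul_inv, mul_inv, inv_pow, inv_pow]]
    exact not_congr inv_eq_one
  -- nonvanishing of the factors
  have hg0 : gPoly F e s L (m + 2) ≠ 0 := by
    intro h0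
    have := congrArg (eval 0) h0
    simp [geq] at this
  have hh0 : hPoly F a e s L (m + 2) ≠ 0 := by
    intro h0
    have := congrArg (eval 0) h0
    simp [heq] at this
  -- evaluation of h at L⁻¹ vanishes iff condII
  have evalh : (hPoly F a e s L (m + 2)).eval L⁻¹ = 0 ↔ condII F a e s L (m + 2) := by
    rw [cII_iff, heq]
    simp only [eval_add, eval_sub, eval_mul, eval_one, eval_C, eval_X, eval_pow]
    have cL : L * L⁻¹ = 1 := mul_inv_cancel₀ hL
    have h3 : (L⁻¹ * L) ^ 2 = 1 := by rw [inv_mul_cancel₀ hL, one_pow]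
    constructor <;> intro h
    · have h2 := congrArg (· * L ^ 2) h
      simp only [zero_mul] at h2
      have key : L * (s * a ^ 2
          - (s ^ 2 * e ^ 2 * ((L ^ m) ^ 2 * L) + L + 2 * s * e * (L ^ m * L))) = 0 := by
        linear_combination (-1 : F) * h2 + (s ^ 2 * e ^ 2 * (L ^ m) ^ 2 * L ^ 2) * h3
          + (2 * s * e * L ^ m * L ^ 2 - s * a ^ 2 * L) * cL
      rcases mul_eq_zero.mp key with h' | h'
      · exact absurd h' hL
      · exact sub_eq_zero.mp h'
    · linear_combination (-L⁻¹) * h + (-1 - s ^ 2 * e ^ 2 * (L ^ m) ^ 2) * cL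
        + (s ^ 2 * e ^ 2 * (L ^ m) ^ 2) * h3
  -- root multiplicity of g
  have mg1 : condI F e s L (m + 2) →
      (gPoly F e s L (m + 2)).rootMultiplicity L⁻¹ = 1 := by
    intro h1
    rw [geq, g_factor_aux hL (cI_iff.mp h1),
      rootMultiplicity_mul (by
        exact mul_ne_zero (by simpa using neg_ne_zero.mpr hL) (X_sub_C_ne_zero L⁻¹)),
      rootMultiplicity_C, rootMultiplicity_X_sub_C_self]
  have mg0 : ¬ condI F e s L (m + 2) →
      (gPoly F e s L (m + 2)).rootMultiplicity L⁻¹ = 0 := by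
    intro h1
    apply rootMultiplicity_eq_zero
    rw [cI_iff] at h1
    simp only [IsRoot, geq, eval_sub, eval_mul, eval_one, eval_C, eval_X]
    intro hcon
    exact h1 (by linear_combination -hcon - (e * s * L ^ m) * (mul_inv_cancel₀ hL))
  -- root multiplicity of h
  have mh0 : ¬ condII F a e s L (m + 2) →
      (hPoly F a e s L (m + 2)).rootMultiplicity L⁻¹ = 0 := fun h2 =>
    rootMultiplicity_eq_zero (fun hr => h2 (evalh.mp hr))
  have mh_cond : condII F a e s L (m + 2) →
      (hPoly F a e s L (m + 2)).rootMultiplicity L⁻¹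
        = 1 + (X - C ((s ^ 2 * e ^ 2 * ((L ^ m) ^ 2 * L))⁻¹)).rootMultiplicity L⁻¹ := by
    intro h2
    have hc := cII_iff.mp h2
    rw [heq, h_factor_aux ha he hs hL ht hc,
      rootMultiplicity_mul (by
        refine mul_ne_zero (mul_ne_zero ?_ (X_sub_C_ne_zero _)) (X_sub_C_ne_zero _)
        simpa [C_ne_zero] using by simp [hs, he, ht, hL]),
      rootMultiplicity_mul (mul_ne_zero (by
        simpa [C_ne_zero] using by simp [hs, he, ht, hL]) (X_sub_C_ne_zero _)),
      rootMultiplicity_C, rootMultiplicity_X_sub_C_self]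
  have hr_iff : (s ^ 2 * e ^ 2 * ((L ^ m) ^ 2 * L))⁻¹ = L⁻¹ ↔
      s ^ 2 * e ^ 2 * (L ^ m) ^ 2 = 1 := by
    rw [inv_inj, ← mul_assoc, mul_left_eq_self₀]
    simp [hL]
  have he0 : ¬ condII F a e s L (m + 2) → (hPoly F a e s L (m + 2)).eval L⁻¹ ≠ 0 :=
    fun h2 hx => h2 (evalh.mp hx)
  rw [rootMultiplicity_mul (mul_ne_zero hh0 hg0)]
  by_cases h2 : condII F a e s L (m + 2)
  · have mh := mh_cond h2
    have hev0 : (hPoly F a e s L (m + 2)).eval L⁻¹ = 0 := evalh.mpr h2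
    by_cases h3 : condIII F e s L (m + 2)
    · have hr0 : (X - C ((s ^ 2 * e ^ 2 * ((L ^ m) ^ 2 * L))⁻¹)).rootMultiplicity L⁻¹ = 0 := by
        apply rootMultiplicity_eq_zero
        simp only [IsRoot, eval_sub, eval_X, eval_C, sub_eq_zero]
        intro hcon
        exact (cIII_iff.mp h3) (hr_iff.mp hcon.symm)
      by_cases h1 : condI F e s L (m + 2)
      · rw [mh, hr0, mg1 h1]
        simp [h1, h2, h3, hev0]
      · rw [mh, hr0, mg0 h1]
        simp [h1, h2, h3]
    · have hone : s ^ 2 * e ^ 2 * (L ^ m) ^ 2 = 1 :=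
        not_not.mp (fun hne => h3 (cIII_iff.mpr hne))
      have hr1 : (X - C ((s ^ 2 * e ^ 2 * ((L ^ m) ^ 2 * L))⁻¹)).rootMultiplicity L⁻¹ = 1 := by
        rw [hr_iff.mpr hone, rootMultiplicity_X_sub_C_self]
      by_cases h1 : condI F e s L (m + 2)
      · rw [mh, hr1, mg1 h1]
        simp [h1, h2, h3]
        decide
      · rw [mh, hr1, mg0 h1]
        simp [h1, h2, h3, hev0]
  · rw [mh0 h2]
    by_cases h1 : condI F e s L (m + 2)
    · rw [mg1 h1]
      simp [h1, h2, he0 h2]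
    · rw [mg0 h1]
      simp [h1, h2]
end

section
/- The multiplicity of L⁻¹ as a root of P equals 1 if and only if either (Case I) Condition (I) holds and h(L⁻¹) ≠ 0, or (Case II) Conditions (II) and (III) hold and Condition (I) fails. -/
open Polynomial

/-- Auxiliary algebraic identity: Condition (II), expressed with `M = L^m`, is equivalent
to the vanishing of the (denominator-cleared) value of `h` at `L⁻¹`. -/
lemma auxII {F : Type*} [Field F] (a e s L M : F) (he : e ≠ 0) (hs : s ≠ 0)
    (hL : L ≠ 0) (hM : M ≠ 0) :
    (s⁻¹ * a ^ 2 * (e⁻¹) ^ 2 * (M ^ 2 * L)⁻¹ - 2 * s⁻¹ * e⁻¹ * M⁻¹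
      - (s⁻¹) ^ 2 * (e⁻¹) ^ 2 * (M ^ 2)⁻¹ = 1)
    ↔ (L ^ 2 - (s * a ^ 2 - 2 * s * e * (M * L)) * L + s ^ 2 * e ^ 2 * (M ^ 2 * L ^ 2) = 0) := by
  have hden : s ^ 2 * e ^ 2 * M ^ 2 * L ≠ 0 := by simp [hs, he, hM, hL]
  have h1 : s⁻¹ * a ^ 2 * (e⁻¹) ^ 2 * (M ^ 2 * L)⁻¹
      = (a ^ 2 * s) / (s ^ 2 * e ^ 2 * M ^ 2 * L) := by
    rw [eq_div_iff hden]; field_simp; try ring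
  have h2 : 2 * s⁻¹ * e⁻¹ * M⁻¹ = (2 * s * e * M * L) / (s ^ 2 * e ^ 2 * M ^ 2 * L) := by
    rw [eq_div_iff hden]; field_simp; try ring
  have h3 : (s⁻¹) ^ 2 * (e⁻¹) ^ 2 * (M ^ 2)⁻¹ = L / (s ^ 2 * e ^ 2 * M ^ 2 * L) := by
    rw [eq_div_iff hden]; field_simp; try ring
  rw [h1, h2, h3, div_sub_div_same, div_sub_div_same, div_eq_one_iff_eq hden]
  constructor <;> intro h
  · linear_combination (-L) * h
  · have h2' : L * (a ^ 2 * s - 2 * s * e * M * L - L - s ^ 2 * e ^ 2 * M ^ 2 * L) = 0 := by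
      linear_combination -h
    rcases mul_eq_zero.1 h2' with h3' | h3'
    · exact absurd h3' hL
    · linear_combination h3'

/-- Characterization of `d_{ℓ,f} = 1` from the proof of Lemma 2.5: the multiplicity of `L⁻¹`
as a root of `P = h · g` equals `1` iff either Case (I) or Case (II) holds. -/
theorem multiplicity_eq_one_iff (F : Type*) [Field F] (a e s L : F)
    (ha : a ≠ 0) (he : e ≠ 0) (hs : s ≠ 0) (hL : L ≠ 0) (k : ℕ) (hk : 2 ≤ k) :
    (hPoly F a e s L k * gPoly F e s L k).rootMultiplicity L⁻¹ = 1 ↔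
      (condI F e s L k ∧ (hPoly F a e s L k).eval L⁻¹ ≠ 0) ∨
      (condII F a e s L k ∧ condIII F e s L k ∧ ¬ condI F e s L k) := by
  classical
  obtain ⟨m, rfl⟩ : ∃ m, k = m + 2 := ⟨k - 2, by omega⟩
  have e1 : m + 2 - 1 = m + 1 := by omega
  have e2 : 2 * (m + 2) - 2 = 2 * m + 2 := by omega
  have e3 : m + 2 - 2 = m := by omega
  obtain ⟨B, hBdef⟩ : ∃ B : F, B = s * a ^ 2 - 2 * s * e * L ^ (m + 1) := ⟨_, rfl⟩
  obtain ⟨A, hAdef⟩ : ∃ A : F, A = s ^ 2 * e ^ 2 * L ^ (2 * m + 2) := ⟨_, rfl⟩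
  obtain ⟨c, hcdef⟩ : ∃ c : F, c = e * s * L ^ (m + 1) := ⟨_, rfl⟩
  have hc0 : c ≠ 0 := by
    rw [hcdef]
    exact mul_ne_zero (mul_ne_zero he hs) (pow_ne_zero _ hL)
  have hA0 : A ≠ 0 := by
    rw [hAdef]
    exact mul_ne_zero (mul_ne_zero (pow_ne_zero _ hs) (pow_ne_zero _ he)) (pow_ne_zero _ hL)
  have hL2 : (L : F) ^ 2 ≠ 0 := pow_ne_zero _ hL
  have hiL : L⁻¹ * L = 1 := inv_mul_cancel₀ hL
  -- rewrite h, g in terms of A, B, c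
  have hh : hPoly F a e s L (m + 2) = 1 - C B * X + C A * X ^ 2 := by
    rw [hPoly, e1, e2, ← hBdef, ← hAdef]
  have hg : gPoly F e s L (m + 2) = C (-c) * (X - C c⁻¹) := by
    rw [gPoly, e1, ← hcdef]
    have : C (-c) * (X - C c⁻¹) = 1 - C c * X := by
      rw [map_neg, neg_mul, mul_sub, ← C_mul, mul_inv_cancel₀ hc0, map_one]
      ring
    rw [this]
  -- evaluation of h
  have heval : (hPoly F a e s L (m + 2)).eval L⁻¹ = 1 - B * L⁻¹ + A * (L⁻¹) ^ 2 := by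
    simp [hh]
  have hevalfrac : (hPoly F a e s L (m + 2)).eval L⁻¹ = (L ^ 2 - B * L + A) / L ^ 2 := by
    rw [heval, eq_div_iff hL2]
    linear_combination (A * (L⁻¹ * L + 1) - B * L) * hiL
  have hevaliff : (hPoly F a e s L (m + 2)).eval L⁻¹ = 0 ↔ L ^ 2 - B * L + A = 0 := by
    rw [hevalfrac, _root_.div_eq_zero_iff, or_iff_left hL2]
  -- condition II
  have hII : condII F a e s L (m + 2) ↔ (hPoly F a e s L (m + 2)).eval L⁻¹ = 0 := by
    rw [hevaliff, condII,
      show (3:ℤ) - 2*((m+2:ℕ):ℤ) = -(2*m+1 : ℕ) by push_cast; ring,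
      show (2:ℤ) - ((m+2:ℕ):ℤ) = -(m : ℕ) by push_cast; ring,
      show (4:ℤ) - 2*((m+2:ℕ):ℤ) = -(2*m : ℕ) by push_cast; ring,
      zpow_neg, zpow_neg, zpow_neg, zpow_natCast, zpow_natCast, zpow_natCast,
      hBdef, hAdef,
      show L ^ (2*m+1) = (L ^ m) ^ 2 * L by ring,
      show L ^ (2*m) = (L ^ m) ^ 2 by ring,
      show L ^ (m+1) = L ^ m * L by ring,
      show L ^ (2*m+2) = (L ^ m) ^ 2 * L ^ 2 by ring]
    exact auxII a e s L (L ^ m) he hs hL (pow_ne_zero m hL)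
  -- condition III
  have hIII : condIII F e s L (m + 2) ↔ s ^ 2 * e ^ 2 * L ^ (2 * m) ≠ 1 := by
    rw [condIII,
      show (4:ℤ) - 2*((m+2:ℕ):ℤ) = -(2*m : ℕ) by push_cast; ring,
      zpow_neg, zpow_natCast,
      show s⁻¹^2*e⁻¹^2*(L^(2*m))⁻¹ = (s^2*e^2*L^(2*m))⁻¹ by
        rw [mul_inv, mul_inv, inv_pow, inv_pow],
      ne_eq, inv_eq_one]
  -- condition I
  have hI : condI F e s L (m + 2) ↔ L⁻¹ = c⁻¹ := by
    rw [condI, e3, inv_eq_iff_eq_inv, inv_inv, hcdef]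
    constructor
    · intro h
      have t : e * s * L ^ (m+1) = (e * s * L ^ m) * L := by ring
      rw [t, h, one_mul]
    · intro h
      have t : (e * s * L ^ m) * L = 1 * L := by
        rw [one_mul, show e * s * L ^ m * L = e * s * L ^ (m+1) from by ring]
        exact h.symm
      exact mul_right_cancel₀ hL t
  -- nonvanishing
  have hCc : (C (-c) : F[X]) ≠ 0 := C_ne_zero.mpr (neg_ne_zero.mpr hc0)
  have hX1 : (X : F[X]) - C c⁻¹ ≠ 0 := X_sub_C_ne_zero c⁻¹
  have hg0 : gPoly F e s L (m + 2) ≠ 0 := by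
    rw [hg]; exact mul_ne_zero hCc hX1
  have hh0 : hPoly F a e s L (m + 2) ≠ 0 := by
    intro h0
    have h1 := congrArg (fun p : F[X] => p.coeff 2) h0
    simp [hh, coeff_one] at h1
    exact hA0 h1
  -- root multiplicity of g
  have hrmg : (gPoly F e s L (m + 2)).rootMultiplicity L⁻¹ = if L⁻¹ = c⁻¹ then 1 else 0 := by
    rw [hg, rootMultiplicity_mul (mul_ne_zero hCc hX1), rootMultiplicity_C,
      rootMultiplicity_X_sub_C, zero_add]
  rw [rootMultiplicity_mul (mul_ne_zero hh0 hg0)]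
  by_cases hIc : condI F e s L (m + 2)
  · by_cases hre : (hPoly F a e s L (m + 2)).eval L⁻¹ = 0
    · have h1 : 0 < (hPoly F a e s L (m + 2)).rootMultiplicity L⁻¹ :=
        (rootMultiplicity_pos hh0).2 hre
      have h2 : (gPoly F e s L (m + 2)).rootMultiplicity L⁻¹ = 1 := by
        rw [hrmg, if_pos (hI.1 hIc)]
      constructor
      · intro h; omega
      · rintro (⟨_, hne⟩ | ⟨_, _, hne⟩)
        · exact absurd hre hne
        · exact absurd hIc hne
    · have h1 : (hPoly F a e s L (m + 2)).rootMultiplicity L⁻¹ = 0 :=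
        rootMultiplicity_eq_zero hre
      have h2 : (gPoly F e s L (m + 2)).rootMultiplicity L⁻¹ = 1 := by
        rw [hrmg, if_pos (hI.1 hIc)]
      rw [h1, h2]
      exact ⟨fun _ => Or.inl ⟨hIc, hre⟩, fun _ => by norm_num⟩
  · have h2 : (gPoly F e s L (m + 2)).rootMultiplicity L⁻¹ = 0 := by
      rw [hrmg, if_neg (fun h => hIc (hI.2 h))]
    rw [h2, add_zero]
    by_cases hre : (hPoly F a e s L (m + 2)).eval L⁻¹ = 0
    · -- factor h
      have hnum : L ^ 2 - B * L + A = 0 := hevaliff.1 hre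
      have hsum : A * (L⁻¹ + L / A) = B := by
        rw [mul_add, mul_div_cancel₀ _ hA0]
        have t : (A * L⁻¹ + L) * L = B * L := by
          rw [add_mul, mul_assoc, inv_mul_cancel₀ hL, mul_one]
          linear_combination hnum
        exact mul_right_cancel₀ hL t
      have hone : A * L⁻¹ * (L / A) = 1 := by
        rw [div_eq_mul_inv,
          show A * L⁻¹ * (L * A⁻¹) = (A * A⁻¹) * (L⁻¹ * L) from by ring,
          mul_inv_cancel₀ hA0, hiL, one_mul]
      have hfac : hPoly F a e s L (m + 2) = C A * (X - C L⁻¹) * (X - C (L / A)) := by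
        have expand : C A * (X - C L⁻¹) * (X - C (L / A))
            = C (A * L⁻¹ * (L / A)) - C (A * (L⁻¹ + L / A)) * X + C A * X ^ 2 := by
          simp only [C_mul, C_add]
          ring
        rw [hh, expand, hone, hsum, map_one]
      have hXL1 : (X : F[X]) - C L⁻¹ ≠ 0 := X_sub_C_ne_zero _
      have hXA : (X : F[X]) - C (L / A) ≠ 0 := X_sub_C_ne_zero _
      have hCA : (C A : F[X]) ≠ 0 := C_ne_zero.mpr hA0
      have hrmh : (hPoly F a e s L (m + 2)).rootMultiplicity L⁻¹
          = 1 + if L⁻¹ = L / A then 1 else 0 := by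
        rw [hfac, rootMultiplicity_mul (mul_ne_zero (mul_ne_zero hCA hXL1) hXA),
          rootMultiplicity_mul (mul_ne_zero hCA hXL1),
          rootMultiplicity_C, rootMultiplicity_X_sub_C, rootMultiplicity_X_sub_C,
          if_pos rfl, zero_add]
      have hroot2 : L⁻¹ = L / A ↔ ¬ condIII F e s L (m + 2) := by
        rw [hIII, not_not]
        constructor
        · intro hq
          have hq2 : L = L⁻¹ * A := (div_eq_iff hA0).1 hq.symm
          have hLL : L * L = A := by
            have t := congrArg (fun x => L * x) hq2
            simpa [← mul_assoc, mul_inv_cancel₀ hL] using t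
          have key : (s ^ 2 * e ^ 2 * L ^ (2*m)) * L ^ 2 = 1 * L ^ 2 := by
            calc (s ^ 2 * e ^ 2 * L ^ (2*m)) * L ^ 2 = s ^ 2 * e ^ 2 * L ^ (2*m+2) := by ring
            _ = A := hAdef.symm
            _ = L * L := hLL.symm
            _ = 1 * L ^ 2 := by ring
          exact mul_right_cancel₀ hL2 key
        · intro hq
          have hA2 : A = L ^ 2 := by
            calc A = s ^ 2 * e ^ 2 * L ^ (2*m+2) := hAdef
            _ = (s ^ 2 * e ^ 2 * L ^ (2*m)) * L ^ 2 := by ring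
            _ = 1 * L ^ 2 := by rw [hq]
            _ = L ^ 2 := one_mul _
          rw [hA2, pow_two, eq_div_iff (mul_ne_zero hL hL), ← mul_assoc,
            inv_mul_cancel₀ hL, one_mul]
      rw [hrmh]
      by_cases hq : L⁻¹ = L / A
      · rw [if_pos hq]
        constructor
        · intro h; omega
        · rintro (⟨hi, _⟩ | ⟨_, hiii, _⟩)
          · exact absurd hi hIc
          · exact absurd hiii (hroot2.1 hq)
      · rw [if_neg hq]
        constructor
        · intro _
          have hciii : condIII F e s L (m + 2) := by
            by_contra hcc
            exact hq (hroot2.2 hcc)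
          exact Or.inr ⟨hII.2 hre, hciii, hIc⟩
        · intro _; norm_num
    · have h1 : (hPoly F a e s L (m + 2)).rootMultiplicity L⁻¹ = 0 :=
        rootMultiplicity_eq_zero hre
      rw [h1]
      constructor
      · intro h; omega
      · rintro (⟨hi, _⟩ | ⟨hii, _, _⟩)
        · exact absurd hi hIc
        · exact absurd (hII.1 hii) hre
end

section
/- The multiplicity of L⁻¹ as a root of P equals 3 if and only if Conditions (I) and (II) hold and Condition (III) fails. -/
open Polynomial

/-!
Since `P(0) = 1` and `deg P ≤ 3`, the root `L⁻¹` has multiplicity `3` exactly when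
`P = (1 - L X)³`. Comparing coefficients of `(1 - b X)(1 - c₁ X + c₂ X²) = (1 - r X)³` gives
`b + c₁ = 3r`, `c₂ + b c₁ = 3r²`, `b c₂ = r³`, which force `(b - r)³ = 0`; hence
`b = r`, `c₁ = 2r`, `c₂ = r²`. For `P = h g` these say `u := e s L^{k-2} = 1` and `s a² = 4L`,
and in terms of `u` Conditions (II) and (III) read `s a² L⁻¹ u⁻² - 2u⁻¹ - u⁻² = 1` and `u⁻² ≠ 1`.
-/

section Cubic

variable {R : Type*} [CommRing R]

theorem quadratic_mul_linear_eq_toPoly (c₁ c₂ b : R) :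
    (1 - C c₁ * X + C c₂ * X ^ 2) * (1 - C b * X) =
      Cubic.toPoly ⟨-(b * c₂), c₂ + b * c₁, -(b + c₁), 1⟩ := by
  simp only [Cubic.toPoly, C_neg, C_mul, C_add, map_one]
  ring

theorem quadratic_mul_linear_eq_cube_iff [NoZeroDivisors R] {c₁ c₂ b r : R} :
    (1 - C c₁ * X + C c₂ * X ^ 2) * (1 - C b * X) = (1 - C r * X) ^ 3 ↔
      b = r ∧ c₁ = 2 * r ∧ c₂ = r ^ 2 := by
  have hcube : (1 - C r * X) ^ 3 = (1 - C (2 * r) * X + C (r ^ 2) * X ^ 2) * (1 - C r * X) := by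
    simp only [C_mul, C_pow, map_ofNat]
    ring
  rw [hcube, quadratic_mul_linear_eq_toPoly, quadratic_mul_linear_eq_toPoly,
    Cubic.toPoly_injective, Cubic.mk.injEq]
  constructor
  · rintro ⟨h₃, h₂, h₁, -⟩
    have hbr : (b - r) ^ 3 = 0 := by linear_combination (-b ^ 2) * h₁ - b * h₂ - h₃
    obtain rfl : b = r := sub_eq_zero.1 (pow_eq_zero_iff three_ne_zero |>.1 hbr)
    have hc₁ : c₁ = 2 * b := by linear_combination -h₁
    exact ⟨rfl, hc₁, by linear_combination h₂ - b * hc₁⟩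
  · rintro ⟨rfl, rfl, rfl⟩
    exact ⟨rfl, rfl, rfl, rfl⟩

end Cubic

section Field

variable {F : Type*} [Field F]

theorem one_sub_C_mul_X_eq {r : F} (hr : r ≠ 0) :
    (1 - C r * X : F[X]) = C (-r) * (X - C r⁻¹) := by
  rw [mul_sub, ← C_mul, neg_mul, mul_inv_cancel₀ hr, C_neg, C_neg, map_one]
  ring

theorem rootMultiplicity_inv_eq_iff_eq_one_sub_C_mul_X_pow {p : F[X]} {r : F} {n : ℕ}
    (hr : r ≠ 0) (hdeg : p.natDegree ≤ n) (hp0 : p.coeff 0 = 1) :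
    p.rootMultiplicity r⁻¹ = n ↔ p = (1 - C r * X) ^ n := by
  have hpow : ((1 - C r * X) ^ n : F[X]) = C ((-r) ^ n) * (X - C r⁻¹) ^ n := by
    rw [one_sub_C_mul_X_eq hr, mul_pow, C_pow]
  constructor
  · intro hm
    have hp : p ≠ 0 := fun h => by simp [h] at hp0
    obtain ⟨q, rfl⟩ : (X - C r⁻¹) ^ n ∣ p := (le_rootMultiplicity_iff hp).1 hm.ge
    have hq : q ≠ 0 := right_ne_zero_of_mul hp
    have hqdeg : q.natDegree ≤ 0 := by
      rw [natDegree_mul (pow_ne_zero _ (X_sub_C_ne_zero _)) hq, natDegree_pow,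
        natDegree_X_sub_C] at hdeg
      omega
    rw [eq_C_of_natDegree_le_zero hqdeg] at hp0 ⊢
    have hq0 : q.coeff 0 = (-r) ^ n := by
      rw [coeff_zero_eq_eval_zero] at hp0
      simp only [eval_mul, eval_pow, eval_sub, eval_X, eval_C, zero_sub] at hp0
      rw [← inv_neg, inv_pow, inv_mul_eq_one₀ (pow_ne_zero _ (neg_ne_zero.2 hr))] at hp0
      exact hp0.symm
    rw [hpow, hq0, mul_comm]
  · rintro rfl
    rw [hpow, rootMultiplicity_mul (by simp [hr, X_sub_C_ne_zero]), rootMultiplicity_C,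
      rootMultiplicity_X_sub_C_pow, zero_add]

theorem rootMultiplicity_inv_quadratic_mul_linear_eq_three_iff {c₁ c₂ b r : F} (hr : r ≠ 0) :
    ((1 - C c₁ * X + C c₂ * X ^ 2) * (1 - C b * X)).rootMultiplicity r⁻¹ = 3 ↔
      b = r ∧ c₁ = 2 * r ∧ c₂ = r ^ 2 := by
  rw [rootMultiplicity_inv_eq_iff_eq_one_sub_C_mul_X_pow hr, quadratic_mul_linear_eq_cube_iff]
  all_goals rw [quadratic_mul_linear_eq_toPoly]
  exacts [natDegree_cubic_le, Cubic.coeff_eq_d]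

end Field

section Conditions

variable {F : Type*} [Field F] {a e s L : F} {k : ℕ}

theorem hPoly_eq :
    hPoly F a e s L k =
      1 - C (s * a ^ 2 - 2 * (e * s * L ^ (k - 1))) * X + C ((e * s * L ^ (k - 1)) ^ 2) * X ^ 2 := by
  rw [hPoly, show 2 * k - 2 = (k - 1) * 2 by omega]
  congr 4 <;> ring

theorem mul_pow_sub_one_eq_mul_mul_pow_sub_two (hk : 2 ≤ k) :
    e * s * L ^ (k - 1) = L * (e * s * L ^ (k - 2)) := by
  rw [show k - 1 = k - 2 + 1 by omega, pow_succ]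
  ring

theorem inv_mul_inv_mul_zpow_two_sub (hk : 2 ≤ k) :
    s⁻¹ * e⁻¹ * L ^ ((2 : ℤ) - k) = (e * s * L ^ (k - 2))⁻¹ := by
  rw [show (2 : ℤ) - k = -((k - 2 : ℕ) : ℤ) by omega, zpow_neg, zpow_natCast, mul_inv, mul_inv]
  ring

theorem condII_iff (hL : L ≠ 0) (hk : 2 ≤ k) :
    condII F a e s L k ↔
      s * a ^ 2 * L⁻¹ * (e * s * L ^ (k - 2))⁻¹ ^ 2 - 2 * (e * s * L ^ (k - 2))⁻¹
        - (e * s * L ^ (k - 2))⁻¹ ^ 2 = 1 := by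
  have hL_three : L ^ ((3 : ℤ) - 2 * k) = L⁻¹ * (L ^ ((2 : ℤ) - k)) ^ 2 := by
    rw [← zpow_neg_one, ← zpow_natCast, ← zpow_mul, ← zpow_add₀ hL]
    congr 1; push_cast; ring
  have hL_four : L ^ ((4 : ℤ) - 2 * k) = (L ^ ((2 : ℤ) - k)) ^ 2 := by
    rw [← zpow_natCast, ← zpow_mul]
    congr 1; push_cast; ring
  have hfirst : s⁻¹ * a ^ 2 * e⁻¹ ^ 2 * (L⁻¹ * (L ^ ((2 : ℤ) - k)) ^ 2) =
      s * a ^ 2 * L⁻¹ * (s⁻¹ * e⁻¹ * L ^ ((2 : ℤ) - k)) ^ 2 := by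
    -- valid also for `s = 0`, as `0⁻¹ = 0`
    have hs_inv : s⁻¹ * s * s⁻¹ = s⁻¹ := by
      simpa only [inv_inv] using mul_inv_mul_cancel s⁻¹
    linear_combination (-(a ^ 2 * e⁻¹ ^ 2 * L⁻¹ * (L ^ ((2 : ℤ) - k)) ^ 2)) * hs_inv
  rw [condII, ← inv_mul_inv_mul_zpow_two_sub hk, hL_three, hL_four, hfirst]
  constructor <;> intro h <;> linear_combination h

theorem condIII_iff (hk : 2 ≤ k) : condIII F e s L k ↔ (e * s * L ^ (k - 2))⁻¹ ^ 2 ≠ 1 := by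
  rw [condIII, ← inv_mul_inv_mul_zpow_two_sub hk, show (4 : ℤ) - 2 * k = (2 - k) * 2 by ring,
    zpow_mul, zpow_ofNat, mul_pow, mul_pow]

end Conditions

theorem multiplicity_eq_three_iff_general (F : Type*) [Field F] (a e s L : F)
    (hL : L ≠ 0) (k : ℕ) (hk : 2 ≤ k) :
    (hPoly F a e s L k * gPoly F e s L k).rootMultiplicity L⁻¹ = 3 ↔
      condI F e s L k ∧ condII F a e s L k ∧ ¬ condIII F e s L k := by
  rw [hPoly_eq, gPoly, mul_pow_sub_one_eq_mul_mul_pow_sub_two hk,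
    rootMultiplicity_inv_quadratic_mul_linear_eq_three_iff hL, condI, condII_iff hL hk,
    condIII_iff hk, not_not]
  generalize e * s * L ^ (k - 2) = u
  constructor
  · rintro ⟨h₁, h₂, -⟩
    obtain rfl : u = 1 := mul_left_cancel₀ hL (h₁.trans (mul_one L).symm)
    refine ⟨rfl, ?_, by norm_num⟩
    field_simp
    linear_combination h₂
  · rintro ⟨rfl, h₂, -⟩
    field_simp at h₂
    exact ⟨mul_one L, by linear_combination h₂, by ring⟩

/-- Characterization of `d_{ℓ,f} = 3` from the end of the proof of Lemma 2.5: the multiplicity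
of `L⁻¹` as a root of `P = h · g` equals `3` iff Conditions (I) and (II) hold and
Condition (III) fails. -/
theorem multiplicity_eq_three_iff (F : Type*) [Field F] (a e s L : F)
    (ha : a ≠ 0) (he : e ≠ 0) (hs : s ≠ 0) (hL : L ≠ 0) (k : ℕ) (hk : 2 ≤ k) :
    (hPoly F a e s L k * gPoly F e s L k).rootMultiplicity L⁻¹ = 3 ↔
      condI F e s L k ∧ condII F a e s L k ∧ ¬ condIII F e s L k :=
  multiplicity_eq_three_iff_general F a e s L hL k hk
end
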